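/- Let X : [0,T] → [ε,∞) be absolutely continuous with X(0) = ε > 0, and suppose that for some p ≥ 2, a ∈ L¹([0,T]) nonnegative, M ≥ 0, and γ ∈ L¹([0,T]) nonnegative, one has X'(t) ≤ p a(t) M^{2/p} X(t)^{1−2/p} + γ(t) X(t) for a.e. t. Then for all t ∈ [0,T]: X(t) ≤ e^{∫₀ᵗ γ} ( ε^{2/p} + 2 M^{2/p} ∫₀ᵗ a(τ) e^{−(2/p)∫₀^τ γ} dτ )^{p/2}. -/

import Mathlib

open MeasureTheory Real Set
open scoped FourierTransform ENNReal NNReal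

noncomputable section

abbrev Plane : Type := EuclideanSpace ℝ (Fin 2)

/-- standard basis vectors of the plane -/
def eb (i : Fin 2) : Plane := EuclideanSpace.single i 1

/-- a concrete smooth radial cutoff `χ`, equal to `1` on `B(0,3/4)` and supported in `B(0,4/3)` -/
def chiB : ContDiffBump (0 : Plane) := ⟨3/4, 4/3, by norm_num, by norm_num⟩

/-- the annulus-supported function `φ(ξ) = χ(ξ/2) - χ(ξ)` -/
def φLP (ξ : Plane) : ℝ := chiB ((2:ℝ)⁻¹ • ξ) - chiB ξ

/-- nonhomogeneous Littlewood–Paley dyadic block `Δ_q` -/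
def LP (q : ℤ) (f : Plane → ℂ) : Plane → ℂ :=
  if q < -1 then 0
  else if q = -1 then 𝓕⁻ (fun ξ => (chiB ξ : ℂ) * 𝓕 f ξ)
  else 𝓕⁻ (fun ξ => (φLP ((2:ℝ) ^ (-q) • ξ) : ℂ) * 𝓕 f ξ)

/-- nonhomogeneous Besov norm `B^s_{∞,1}` -/
def besov1 (s : ℝ) (f : Plane → ℂ) : ℝ≥0∞ :=
  ∑' q : ℤ, ENNReal.ofReal ((2:ℝ) ^ (s * (q:ℝ))) * eLpNorm (LP q f) ⊤ volume

/-- nonhomogeneous Besov norm `B^s_{∞,∞}` -/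
def besovInf (s : ℝ) (f : Plane → ℂ) : ℝ≥0∞ :=
  ⨆ q : ℤ, ENNReal.ofReal ((2:ℝ) ^ (s * (q:ℝ))) * eLpNorm (LP q f) ⊤ volume

/-- view a real-valued function as complex valued -/
def cR (f : Plane → ℝ) : Plane → ℂ := fun x => (f x : ℂ)

/-- `i`-th component of a vector field, as a complex-valued function -/
def comp (u : Plane → Plane) (i : Fin 2) : Plane → ℂ := fun x => ((u x i : ℝ) : ℂ)

/-- `B^s_{∞,∞}` norm of a vector field -/
def besovInfVec (s : ℝ) (u : Plane → Plane) : ℝ≥0∞ :=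
  ⨆ q : ℤ, ENNReal.ofReal ((2:ℝ) ^ (s * (q:ℝ))) *
    ⨆ i : Fin 2, eLpNorm (LP q (comp u i)) ⊤ volume

/-- divergence of a planar vector field -/
def divg (u : Plane → Plane) (x : Plane) : ℝ := ∑ i, fderiv ℝ u x (eb i) i

/-- scalar vorticity `ω = ∂₁ u² - ∂₂ u¹` -/
def vort (u : Plane → Plane) (x : Plane) : ℝ :=
  fderiv ℝ u x (eb 0) 1 - fderiv ℝ u x (eb 1) 0

/-- rotation by `π/2`: `v^⊥ = (-v₂, v₁)` -/
def perp (v : Plane) : Plane := (WithLp.equiv 2 (Fin 2 → ℝ)).symm ![-(v 1), v 0]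

/-- Laplacian of a scalar function on the plane -/
def lap (f : Plane → ℝ) (x : Plane) : ℝ :=
  ∑ i, fderiv ℝ (fun y => fderiv ℝ f y (eb i)) x (eb i)

/-- heat kernel on `ℝ²` -/
def heatKer (l : ℝ) (x : Plane) : ℝ := (4 * π * l)⁻¹ * Real.exp (-‖x‖ ^ 2 / (4 * l))

/-- heat semigroup `e^{lΔ}` on `ℝ²` -/
def heat (l : ℝ) (f : Plane → ℂ) (x : Plane) : ℂ := ∫ y, (heatKer l (x - y) : ℂ) * f y

open intervalIntegral in
lemma chain_primitive
    {t : ℝ} (ht : 0 < t) (h₁ h₂ P Q : ℝ → ℝ)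
    (hh₁ : IntervalIntegrable h₁ volume 0 t) (hh₂ : IntervalIntegrable h₂ volume 0 t)
    (hP : ∀ s ∈ Icc 0 t, P s = P 0 + ∫ τ in (0:ℝ)..s, h₁ τ)
    (hQ : ∀ s ∈ Icc 0 t, Q s = Q 0 + ∫ τ in (0:ℝ)..s, h₂ τ)
    {S : Set (ℝ × ℝ)} (hS : IsOpen S) (hmem : ∀ s ∈ Icc 0 t, (P s, Q s) ∈ S)
    (F Fx Fy : ℝ × ℝ → ℝ)
    (hd : ∀ z ∈ S, HasFDerivAt F
      (Fx z • ContinuousLinearMap.fst ℝ ℝ ℝ + Fy z • ContinuousLinearMap.snd ℝ ℝ ℝ) z)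
    (hFx : ContinuousOn Fx S) (hFy : ContinuousOn Fy S) :
    F (P t, Q t) - F (P 0, Q 0)
      = ∫ τ in (0:ℝ)..t, (Fx (P τ, Q τ) * h₁ τ + Fy (P τ, Q τ) * h₂ τ) := by
  have htle := ht.le
  have hicc : uIcc (0:ℝ) t = Icc 0 t := uIcc_of_le htle
  -- integrability on subintervals
  have hsubint : ∀ {f : ℝ → ℝ}, IntervalIntegrable f volume 0 t →
      ∀ x ∈ Icc (0:ℝ) t, ∀ y ∈ Icc (0:ℝ) t, IntervalIntegrable f volume x y := by
    intro f hf x hx y hy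
    exact hf.mono_set (uIcc_subset_uIcc (by rw [hicc]; exact hx) (by rw [hicc]; exact hy))
  -- continuity of the curve
  have hint₁ : IntegrableOn h₁ (uIcc 0 t) volume := by
    rw [hicc]; exact (intervalIntegrable_iff_integrableOn_Icc_of_le htle).mp hh₁
  have hint₂ : IntegrableOn h₂ (uIcc 0 t) volume := by
    rw [hicc]; exact (intervalIntegrable_iff_integrableOn_Icc_of_le htle).mp hh₂
  have hPc : ContinuousOn P (Icc 0 t) := by
    have h : ContinuousOn (fun s => P 0 + ∫ τ in (0:ℝ)..s, h₁ τ) (uIcc 0 t) :=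
      continuousOn_const.add (intervalIntegral.continuousOn_primitive_interval hint₁)
    rw [hicc] at h
    exact h.congr hP
  have hQc : ContinuousOn Q (Icc 0 t) := by
    have h : ContinuousOn (fun s => Q 0 + ∫ τ in (0:ℝ)..s, h₂ τ) (uIcc 0 t) :=
      continuousOn_const.add (intervalIntegral.continuousOn_primitive_interval hint₂)
    rw [hicc] at h
    exact h.congr hQ
  set c : ℝ → ℝ × ℝ := fun s => (P s, Q s) with hc
  have hcc : ContinuousOn c (Icc 0 t) := hPc.prodMk hQc
  set K : Set (ℝ × ℝ) := c '' Icc 0 t with hK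
  have hKc : IsCompact K := isCompact_Icc.image_of_continuousOn hcc
  have hKS : K ⊆ S := by rintro z ⟨s, hs, rfl⟩; exact hmem s hs
  obtain ⟨δ, hδ0, hδS⟩ := hKc.exists_cthickening_subset_open hS hKS
  set K' : Set (ℝ × ℝ) := Metric.cthickening δ K with hK'
  have hK'c : IsCompact K' := hKc.cthickening
  have hKK' : K ⊆ K' := Metric.self_subset_cthickening K
  -- uniform continuity
  have hFxu : UniformContinuousOn Fx K' :=
    hK'c.uniformContinuousOn_of_continuous (hFx.mono hδS)
  have hFyu : UniformContinuousOn Fy K' :=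
    hK'c.uniformContinuousOn_of_continuous (hFy.mono hδS)
  have hcu : UniformContinuousOn c (Icc 0 t) :=
    isCompact_Icc.uniformContinuousOn_of_continuous hcc
  -- the integrand
  set g : ℝ → ℝ := fun τ => Fx (c τ) * h₁ τ + Fy (c τ) * h₂ τ with hgdef
  have hFxcc : ContinuousOn (fun τ => Fx (c τ)) (Icc 0 t) :=
    hFx.comp hcc (fun s hs => hmem s hs)
  have hFycc : ContinuousOn (fun τ => Fy (c τ)) (Icc 0 t) :=
    hFy.comp hcc (fun s hs => hmem s hs)
  have hg : IntervalIntegrable g volume 0 t :=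
    (hh₁.continuousOn_mul (hicc ▸ hFxcc)).add (hh₂.continuousOn_mul (hicc ▸ hFycc))
  have habs : IntervalIntegrable (fun τ => |h₁ τ| + |h₂ τ|) volume 0 t := hh₁.abs.add hh₂.abs
  set C₀ : ℝ := (∫ τ in (0:ℝ)..t, (|h₁ τ| + |h₂ τ|)) + 1 with hC₀def
  have hIabs_nonneg : 0 ≤ ∫ τ in (0:ℝ)..t, (|h₁ τ| + |h₂ τ|) :=
    intervalIntegral.integral_nonneg htle (fun τ _ => by positivity)
  have hC₀ : 0 < C₀ := by rw [hC₀def]; linarith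
  -- reduce to an ε-estimate
  suffices H : ∀ η > 0, |F (c t) - F (c 0) - ∫ τ in (0:ℝ)..t, g τ| ≤ η by
    have h0 : |F (c t) - F (c 0) - ∫ τ in (0:ℝ)..t, g τ| ≤ 0 :=
      le_of_forall_pos_le_add (by intro ε hε; simpa using H ε hε)
    have := abs_nonneg (F (c t) - F (c 0) - ∫ τ in (0:ℝ)..t, g τ)
    have heq : F (c t) - F (c 0) - ∫ τ in (0:ℝ)..t, g τ = 0 := by
      rw [← abs_eq_zero]; linarith
    have := sub_eq_zero.mp heq
    simpa [hc, hgdef] using this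
  intro η hη
  set η' : ℝ := η / C₀ with hη'def
  have hη'0 : 0 < η' := by positivity
  obtain ⟨ρx, hρx0, hρx⟩ := Metric.uniformContinuousOn_iff_le.mp hFxu η' hη'0
  obtain ⟨ρy, hρy0, hρy⟩ := Metric.uniformContinuousOn_iff_le.mp hFyu η' hη'0
  set ρ : ℝ := min ρx ρy with hρdef
  have hρ0 : 0 < ρ := lt_min hρx0 hρy0
  obtain ⟨ρ₂, hρ₂0, hρ₂⟩ := Metric.uniformContinuousOn_iff_le.mp hcu (min (ρ/2) δ)
    (lt_min (by positivity) hδ0)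
  obtain ⟨n, hn⟩ := exists_nat_gt (t / ρ₂)
  have hn0 : 0 < (n:ℝ) := lt_trans (by positivity) hn
  have hn0' : (n:ℝ) ≠ 0 := hn0.ne'
  have hstep0 : 0 < t / n := by positivity
  have hstep_le : t / n ≤ ρ₂ := by
    rw [div_le_iff₀ hn0]
    rw [div_lt_iff₀ hρ₂0] at hn
    nlinarith
  set s : ℕ → ℝ := fun i => i * (t / n) with hsdef
  have hs0 : s 0 = 0 := by simp [hsdef]
  have hsn : s n = t := by simp only [hsdef]; field_simp
  have hmono : ∀ i j : ℕ, i ≤ j → s i ≤ s j := by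
    intro i j hij
    exact mul_le_mul_of_nonneg_right (by exact_mod_cast hij) hstep0.le
  have hsmem : ∀ i ≤ n, s i ∈ Icc (0:ℝ) t := by
    intro i hi
    exact ⟨by positivity, by rw [← hsn]; exact hmono i n hi⟩
  have hstep : ∀ i : ℕ, s (i+1) - s i = t / n := by
    intro i; simp only [hsdef]; push_cast; ring
  have hslt : ∀ i : ℕ, s i < s (i+1) := by
    intro i; have := hstep i; linarith
  -- per-piece estimate
  have key : ∀ i < n,
      |F (c (s (i+1))) - F (c (s i)) - ∫ τ in s i..s (i+1), g τ|
        ≤ η' * ∫ τ in s i..s (i+1), (|h₁ τ| + |h₂ τ|) := by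
    intro i hi
    set x := s i with hxdef
    set y := s (i+1) with hydef
    have hx : x ∈ Icc (0:ℝ) t := hsmem i hi.le
    have hy : y ∈ Icc (0:ℝ) t := hsmem (i+1) hi
    have hxy : x < y := hslt i
    have hIxy : Icc x y ⊆ Icc (0:ℝ) t := Icc_subset_Icc hx.1 hy.2
    have huxy : uIcc x y = Icc x y := uIcc_of_le hxy.le
    -- increments
    have hΔ1 : P y - P x = ∫ τ in x..y, h₁ τ := by
      rw [hP y hy, hP x hx]
      have : P 0 + (∫ τ in (0:ℝ)..y, h₁ τ) - (P 0 + ∫ τ in (0:ℝ)..x, h₁ τ)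
          = (∫ τ in (0:ℝ)..y, h₁ τ) - ∫ τ in (0:ℝ)..x, h₁ τ := by ring
      rw [this]
      exact intervalIntegral.integral_interval_sub_left
        (hsubint hh₁ 0 (left_mem_Icc.mpr htle) y hy) (hsubint hh₁ 0 (left_mem_Icc.mpr htle) x hx)
    have hΔ2 : Q y - Q x = ∫ τ in x..y, h₂ τ := by
      rw [hQ y hy, hQ x hx]
      have : Q 0 + (∫ τ in (0:ℝ)..y, h₂ τ) - (Q 0 + ∫ τ in (0:ℝ)..x, h₂ τ)
          = (∫ τ in (0:ℝ)..y, h₂ τ) - ∫ τ in (0:ℝ)..x, h₂ τ := by ring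
      rw [this]
      exact intervalIntegral.integral_interval_sub_left
        (hsubint hh₂ 0 (left_mem_Icc.mpr htle) y hy) (hsubint hh₂ 0 (left_mem_Icc.mpr htle) x hx)
    -- distance control
    have hdxy : dist (c y) (c x) ≤ min (ρ/2) δ := by
      apply hρ₂ y hy x hx
      rw [Real.dist_eq]
      have := hstep i
      rw [abs_of_nonneg (by linarith : (0:ℝ) ≤ y - x)]
      linarith [hstep_le]
    -- segment
    set L : ℝ → ℝ × ℝ := fun u => c x + u • (c y - c x) with hLdef
    have hLdist : ∀ u ∈ Icc (0:ℝ) 1, dist (L u) (c x) ≤ dist (c y) (c x) := by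
      intro u hu
      have : L u - c x = u • (c y - c x) := by
        rw [hLdef]; exact add_sub_cancel_left _ _
      rw [dist_eq_norm, this, norm_smul, dist_eq_norm]
      have : ‖u‖ ≤ 1 := by rw [Real.norm_eq_abs, abs_of_nonneg hu.1]; exact hu.2
      calc ‖u‖ * ‖c y - c x‖ ≤ 1 * ‖c y - c x‖ :=
            mul_le_mul_of_nonneg_right this (norm_nonneg _)
        _ = ‖c y - c x‖ := one_mul _
    have hLK' : ∀ u ∈ Icc (0:ℝ) 1, L u ∈ K' := by
      intro u hu
      exact Metric.mem_cthickening_of_dist_le (L u) (c x) δ K ⟨x, hx, rfl⟩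
        (le_trans (hLdist u hu) (le_trans hdxy (min_le_right _ _)))
    have hLS : ∀ u ∈ Icc (0:ℝ) 1, L u ∈ S := fun u hu => hδS (hLK' u hu)
    -- derivative of F along segment
    have hider : ∀ u ∈ Icc (0:ℝ) 1, HasDerivAt (fun u => F (L u))
        (Fx (L u) * (P y - P x) + Fy (L u) * (Q y - Q x)) u := by
      intro u hu
      have hL : HasDerivAt L (c y - c x) u := by
        rw [hLdef]
        simpa using ((hasDerivAt_id u).smul_const (c y - c x)).const_add (c x)
      have hcomp := (hd (L u) (hLS u hu)).comp_hasDerivAt u hL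
      have happ : (Fx (L u) • ContinuousLinearMap.fst ℝ ℝ ℝ
          + Fy (L u) • ContinuousLinearMap.snd ℝ ℝ ℝ) (c y - c x)
          = Fx (L u) * (P y - P x) + Fy (L u) * (Q y - Q x) := by
        simp [hc, smul_eq_mul]
      rw [happ] at hcomp
      exact hcomp
    -- mean value theorem
    obtain ⟨u₀, hu₀, hmvt⟩ := exists_hasDerivAt_eq_slope (fun u => F (L u))
      (fun u => Fx (L u) * (P y - P x) + Fy (L u) * (Q y - Q x)) (zero_lt_one)
      (fun u hu => ((hider u hu).continuousAt).continuousWithinAt)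
      (fun u hu => hider u (Ioo_subset_Icc_self hu))
    have hL1 : L 1 = c y := by rw [hLdef]; simp
    have hL0 : L 0 = c x := by rw [hLdef]; simp
    rw [hL1, hL0] at hmvt
    have hFdiff : F (c y) - F (c x)
        = Fx (L u₀) * (P y - P x) + Fy (L u₀) * (Q y - Q x) := by
      rw [hmvt]; simp
    set ξ := L u₀ with hξdef
    have hξK' : ξ ∈ K' := hLK' u₀ (Ioo_subset_Icc_self hu₀)
    -- rewrite difference as an integral
    have hint₁xy := hsubint hh₁ x hx y hy
    have hint₂xy := hsubint hh₂ x hx y hy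
    have hFxcc' : ContinuousOn (fun τ => Fx (c τ)) (uIcc x y) := by
      rw [huxy]; exact hFxcc.mono hIxy
    have hFycc' : ContinuousOn (fun τ => Fy (c τ)) (uIcc x y) := by
      rw [huxy]; exact hFycc.mono hIxy
    have hgxy : IntervalIntegrable g volume x y :=
      (hint₁xy.continuousOn_mul hFxcc').add (hint₂xy.continuousOn_mul hFycc')
    have hdiff : F (c y) - F (c x) - ∫ τ in x..y, g τ
        = ∫ τ in x..y, ((Fx ξ - Fx (c τ)) * h₁ τ + (Fy ξ - Fy (c τ)) * h₂ τ) := by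
      rw [hFdiff, hΔ1, hΔ2]
      rw [← intervalIntegral.integral_const_mul, ← intervalIntegral.integral_const_mul,
        ← intervalIntegral.integral_add (hint₁xy.const_mul _) (hint₂xy.const_mul _)]
      rw [← intervalIntegral.integral_sub
        ((hint₁xy.const_mul _).add (hint₂xy.const_mul _)) hgxy]
      congr 1
      funext τ
      ring
    -- pointwise bound
    have hptbound : ∀ τ ∈ Icc x y,
        |(Fx ξ - Fx (c τ)) * h₁ τ + (Fy ξ - Fy (c τ)) * h₂ τ|
          ≤ η' * (|h₁ τ| + |h₂ τ|) := by
      intro τ hτ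
      have hτt : τ ∈ Icc (0:ℝ) t := hIxy hτ
      have hcτK' : c τ ∈ K' := hKK' ⟨τ, hτt, rfl⟩
      have hdcxcτ : dist (c x) (c τ) ≤ ρ/2 := by
        refine le_trans (le_trans (hρ₂ x hx τ hτt ?_) (min_le_left _ _)) le_rfl
        rw [Real.dist_eq]
        have h1 := hstep i
        rw [abs_of_nonpos (by linarith [hτ.1] : x - τ ≤ 0)]
        have := hτ.2
        linarith [hstep_le]
      have hdξcτ : dist ξ (c τ) ≤ ρ := by
        calc dist ξ (c τ) ≤ dist ξ (c x) + dist (c x) (c τ) := dist_triangle _ _ _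
          _ ≤ ρ/2 + ρ/2 := by
              refine add_le_add (le_trans (hLdist u₀ (Ioo_subset_Icc_self hu₀)) ?_) hdcxcτ
              exact le_trans hdxy (min_le_left _ _)
          _ = ρ := by ring
      have hbx : |Fx ξ - Fx (c τ)| ≤ η' := by
        rw [← Real.dist_eq]
        exact hρx ξ hξK' (c τ) hcτK' (le_trans hdξcτ (min_le_left _ _))
      have hby : |Fy ξ - Fy (c τ)| ≤ η' := by
        rw [← Real.dist_eq]
        exact hρy ξ hξK' (c τ) hcτK' (le_trans hdξcτ (min_le_right _ _))
      calc |(Fx ξ - Fx (c τ)) * h₁ τ + (Fy ξ - Fy (c τ)) * h₂ τ|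
          ≤ |(Fx ξ - Fx (c τ)) * h₁ τ| + |(Fy ξ - Fy (c τ)) * h₂ τ| := abs_add_le _ _
        _ = |Fx ξ - Fx (c τ)| * |h₁ τ| + |Fy ξ - Fy (c τ)| * |h₂ τ| := by
            rw [abs_mul, abs_mul]
        _ ≤ η' * |h₁ τ| + η' * |h₂ τ| := by
            refine add_le_add (mul_le_mul_of_nonneg_right hbx (abs_nonneg _))
              (mul_le_mul_of_nonneg_right hby (abs_nonneg _))
        _ = η' * (|h₁ τ| + |h₂ τ|) := by ring
    -- integral bound
    have herrint : IntervalIntegrable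
        (fun τ => (Fx ξ - Fx (c τ)) * h₁ τ + (Fy ξ - Fy (c τ)) * h₂ τ) volume x y := by
      apply IntervalIntegrable.add
      · exact hint₁xy.continuousOn_mul (continuousOn_const.sub hFxcc')
      · exact hint₂xy.continuousOn_mul (continuousOn_const.sub hFycc')
    rw [hdiff]
    calc |∫ τ in x..y, ((Fx ξ - Fx (c τ)) * h₁ τ + (Fy ξ - Fy (c τ)) * h₂ τ)|
        ≤ ∫ τ in x..y, |(Fx ξ - Fx (c τ)) * h₁ τ + (Fy ξ - Fy (c τ)) * h₂ τ| :=
          intervalIntegral.abs_integral_le_integral_abs hxy.le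
      _ ≤ ∫ τ in x..y, η' * (|h₁ τ| + |h₂ τ|) := by
          apply intervalIntegral.integral_mono_on hxy.le herrint.abs
            (((hsubint habs x hx y hy)).const_mul η')
          exact hptbound
      _ = η' * ∫ τ in x..y, (|h₁ τ| + |h₂ τ|) := intervalIntegral.integral_const_mul _ _
  -- sum up
  have htel : F (c t) - F (c 0)
      = ∑ i ∈ Finset.range n, (F (c (s (i+1))) - F (c (s i))) := by
    rw [Finset.sum_range_sub (fun i => F (c (s i)))]
    rw [hs0, hsn]
  have hintsum : (∫ τ in (0:ℝ)..t, g τ)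
      = ∑ i ∈ Finset.range n, ∫ τ in s i..s (i+1), g τ := by
    rw [intervalIntegral.sum_integral_adjacent_intervals
      (fun i hi => hsubint hg (s i) (hsmem i hi.le) (s (i+1)) (hsmem (i+1) hi))]
    rw [hs0, hsn]
  have habssum : (∫ τ in (0:ℝ)..t, (|h₁ τ| + |h₂ τ|))
      = ∑ i ∈ Finset.range n, ∫ τ in s i..s (i+1), (|h₁ τ| + |h₂ τ|) := by
    rw [intervalIntegral.sum_integral_adjacent_intervals
      (fun i hi => hsubint habs (s i) (hsmem i hi.le) (s (i+1)) (hsmem (i+1) hi))]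
    rw [hs0, hsn]
  rw [htel, hintsum, ← Finset.sum_sub_distrib]
  calc |∑ i ∈ Finset.range n, (F (c (s (i+1))) - F (c (s i)) - ∫ τ in s i..s (i+1), g τ)|
      ≤ ∑ i ∈ Finset.range n, |F (c (s (i+1))) - F (c (s i)) - ∫ τ in s i..s (i+1), g τ| :=
        Finset.abs_sum_le_sum_abs _ _
    _ ≤ ∑ i ∈ Finset.range n, η' * ∫ τ in s i..s (i+1), (|h₁ τ| + |h₂ τ|) := by
        apply Finset.sum_le_sum
        intro i hi
        exact key i (Finset.mem_range.mp hi)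
    _ = η' * ∫ τ in (0:ℝ)..t, (|h₁ τ| + |h₂ τ|) := by
        rw [habssum, Finset.mul_sum]
    _ ≤ η' * C₀ := by
        apply mul_le_mul_of_nonneg_left _ hη'0.le
        rw [hC₀def]; linarith
    _ = η := by rw [hη'def]; field_simp

/-- Yudovich-type differential inequality. -/
theorem stmt12 (T ε M p : ℝ) (X X' a γ : ℝ → ℝ)
    (hε : 0 < ε) (hM : 0 ≤ M) (hp : 2 ≤ p) (hT : 0 ≤ T)
    (hX0 : X 0 = ε) (hXlb : ∀ t ∈ Icc 0 T, ε ≤ X t)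
    (hX'int : IntervalIntegrable X' volume 0 T)
    (haint : IntervalIntegrable a volume 0 T)
    (hγint : IntervalIntegrable γ volume 0 T)
    (ha : ∀ t ∈ Icc 0 T, 0 ≤ a t) (hγ : ∀ t ∈ Icc 0 T, 0 ≤ γ t)
    (hac : ∀ t ∈ Icc 0 T, X t - X 0 = ∫ τ in (0:ℝ)..t, X' τ)
    (hode : ∀ᵐ t, t ∈ Icc 0 T →
      X' t ≤ p * a t * M ^ (2 / p) * X t ^ (1 - 2 / p) + γ t * X t) :
    ∀ t ∈ Icc 0 T,
      X t ≤ Real.exp (∫ τ in (0:ℝ)..t, γ τ) *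
        (ε ^ (2 / p) + 2 * M ^ (2 / p) *
          ∫ τ in (0:ℝ)..t, a τ * Real.exp (-(2 / p) * ∫ s in (0:ℝ)..τ, γ s)) ^ (p / 2) := by
  have hp0 : (0:ℝ) < p := lt_of_lt_of_le two_pos hp
  set k : ℝ := 2 / p with hkdef
  have hk0 : 0 < k := by positivity
  have hkp : k * p = 2 := by rw [hkdef]; field_simp
  have hk2 : k * (p / 2) = 1 := by rw [hkdef]; field_simp
  intro t htmem
  obtain ⟨ht0, htT⟩ := htmem
  set G : ℝ → ℝ := fun s => ∫ τ in (0:ℝ)..s, γ τ with hGdef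
  rcases eq_or_lt_of_le ht0 with rfl | ht
  · -- t = 0
    simp only [intervalIntegral.integral_same, hX0, mul_zero, add_zero]
    rw [Real.exp_zero, one_mul, ← Real.rpow_mul hε.le, hk2, Real.rpow_one]
  · -- 0 < t
    have hsubIcc : Icc (0:ℝ) t ⊆ Icc 0 T := Icc_subset_Icc_right htT
    have hsubU : uIcc (0:ℝ) t ⊆ uIcc 0 T := by
      rw [uIcc_of_le ht0, uIcc_of_le hT]; exact hsubIcc
    have hγt : IntervalIntegrable γ volume 0 t := hγint.mono_set hsubU
    have hX't : IntervalIntegrable X' volume 0 t := hX'int.mono_set hsubU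
    have hat : IntervalIntegrable a volume 0 t := haint.mono_set hsubU
    have hicc : uIcc (0:ℝ) t = Icc 0 t := uIcc_of_le ht0
    have hXpos : ∀ s ∈ Icc (0:ℝ) t, 0 < X s :=
      fun s hs => lt_of_lt_of_le hε (hXlb s (hsubIcc hs))
    -- continuity of G and X
    have hγIntOn : IntegrableOn γ (uIcc 0 t) volume := by
      rw [hicc]; exact (intervalIntegrable_iff_integrableOn_Icc_of_le ht0).mp hγt
    have hGc : ContinuousOn G (Icc 0 t) := by
      have := intervalIntegral.continuousOn_primitive_interval hγIntOn
      rw [hicc] at this; exact this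
    have hXc : ContinuousOn X (Icc 0 t) := by
      have hX'IntOn : IntegrableOn X' (uIcc 0 t) volume := by
        rw [hicc]; exact (intervalIntegrable_iff_integrableOn_Icc_of_le ht0).mp hX't
      have h : ContinuousOn (fun s => X 0 + ∫ τ in (0:ℝ)..s, X' τ) (uIcc 0 t) :=
        continuousOn_const.add (intervalIntegral.continuousOn_primitive_interval hX'IntOn)
      rw [hicc] at h
      exact h.congr (fun s hs => by have := hac s (hsubIcc hs); linarith)
    -- the setup for the chain rule
    set S : Set (ℝ × ℝ) := {z | ε/2 < z.2} with hSdef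
    have hSopen : IsOpen S := isOpen_lt continuous_const continuous_snd
    set F : ℝ × ℝ → ℝ := fun z => Real.exp (-(k * z.1)) * z.2 ^ k with hFdef
    set Fx : ℝ × ℝ → ℝ := fun z => z.2 ^ k * (Real.exp (-(k * z.1)) * (-k)) with hFxdef
    set Fy : ℝ × ℝ → ℝ := fun z => Real.exp (-(k * z.1)) * (k * z.2 ^ (k - 1)) with hFydef
    have hd : ∀ z ∈ S, HasFDerivAt F
        (Fx z • ContinuousLinearMap.fst ℝ ℝ ℝ + Fy z • ContinuousLinearMap.snd ℝ ℝ ℝ) z := by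
      intro z hz
      have hz2 : (0:ℝ) < z.2 := lt_trans (by positivity) hz
      have h1 : HasDerivAt (fun x : ℝ => Real.exp (-(k * x)))
          (Real.exp (-(k * z.1)) * (-k)) z.1 := by
        have := (((hasDerivAt_id z.1).const_mul k).neg).exp
        simpa using this
      have ha1 : HasFDerivAt (fun z : ℝ × ℝ => Real.exp (-(k * z.1)))
          ((Real.exp (-(k * z.1)) * (-k)) • ContinuousLinearMap.fst ℝ ℝ ℝ) z :=
        h1.comp_hasFDerivAt z hasFDerivAt_fst
      have h2 : HasDerivAt (fun x : ℝ => x ^ k) (k * z.2 ^ (k - 1)) z.2 :=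
        Real.hasDerivAt_rpow_const (Or.inl hz2.ne')
      have ha2 : HasFDerivAt (fun z : ℝ × ℝ => z.2 ^ k)
          ((k * z.2 ^ (k - 1)) • ContinuousLinearMap.snd ℝ ℝ ℝ) z :=
        h2.comp_hasFDerivAt z hasFDerivAt_snd
      have hmul := ha1.mul ha2
      rw [smul_smul, smul_smul, add_comm] at hmul
      exact hmul
    have hsnd_ne : ∀ z ∈ S, z.2 ≠ 0 :=
      fun z hz => ne_of_gt (lt_trans (by positivity) hz)
    have hFxc : ContinuousOn Fx S :=
      (continuous_snd.continuousOn.rpow_const (fun z hz => Or.inl (hsnd_ne z hz))).mul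
        ((continuous_const.mul continuous_fst).neg.rexp.mul continuous_const).continuousOn
    have hFyc : ContinuousOn Fy S :=
      ((continuous_const.mul continuous_fst).neg.rexp).continuousOn.mul
        (continuousOn_const.mul
          (continuous_snd.continuousOn.rpow_const (fun z hz => Or.inl (hsnd_ne z hz))))
    have hmem : ∀ s ∈ Icc (0:ℝ) t, (G s, X s) ∈ S := by
      intro s hs
      have := hXlb s (hsubIcc hs)
      simp only [hSdef, mem_setOf_eq]
      linarith
    have hP : ∀ s ∈ Icc (0:ℝ) t, G s = G 0 + ∫ τ in (0:ℝ)..s, γ τ := by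
      intro s hs; simp [hGdef, intervalIntegral.integral_same]
    have hQ : ∀ s ∈ Icc (0:ℝ) t, X s = X 0 + ∫ τ in (0:ℝ)..s, X' τ := by
      intro s hs; have := hac s (hsubIcc hs); linarith
    have hkey := chain_primitive ht γ X' G X hγt hX't hP hQ hSopen hmem F Fx Fy hd hFxc hFyc
    -- integrability of the integrands
    have hcurve : ContinuousOn (fun τ => (G τ, X τ)) (Icc 0 t) := hGc.prodMk hXc
    have hFxGX : ContinuousOn (fun τ => Fx (G τ, X τ)) (uIcc 0 t) := by
      rw [hicc]; exact hFxc.comp hcurve hmem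
    have hFyGX : ContinuousOn (fun τ => Fy (G τ, X τ)) (uIcc 0 t) := by
      rw [hicc]; exact hFyc.comp hcurve hmem
    have hIg : IntervalIntegrable
        (fun τ => Fx (G τ, X τ) * γ τ + Fy (G τ, X τ) * X' τ) volume 0 t :=
      (hγt.continuousOn_mul hFxGX).add (hX't.continuousOn_mul hFyGX)
    have hexpG : ContinuousOn (fun τ => Real.exp (-(k * G τ))) (uIcc 0 t) := by
      rw [hicc]; exact (((hGc.const_smul k).neg).rexp)
    have hBg0 : IntervalIntegrable (fun τ => a τ * Real.exp (-(k * G τ))) volume 0 t :=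
      hat.mul_continuousOn hexpG
    have hBg : IntervalIntegrable
        (fun τ => 2 * M ^ k * (a τ * Real.exp (-(k * G τ)))) volume 0 t :=
      hBg0.const_mul _
    -- a.e. bound of the integrand
    have hae : (fun τ => Fx (G τ, X τ) * γ τ + Fy (G τ, X τ) * X' τ)
        ≤ᵐ[volume.restrict (Icc (0:ℝ) t)]
        (fun τ => 2 * M ^ k * (a τ * Real.exp (-(k * G τ)))) := by
      filter_upwards [ae_restrict_mem measurableSet_Icc, ae_restrict_of_ae hode]
        with τ hτ hodeτ
      have hOde := hodeτ (hsubIcc hτ)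
      have hXτ : 0 < X τ := hXpos τ hτ
      have hFy0 : 0 ≤ Fy (G τ, X τ) := by
        simp only [hFydef]
        exact mul_nonneg (Real.exp_nonneg _)
          (mul_nonneg hk0.le (Real.rpow_nonneg hXτ.le _))
      have step1 : Fy (G τ, X τ) * X' τ
          ≤ Fy (G τ, X τ) * (p * a τ * M ^ k * X τ ^ (1 - k) + γ τ * X τ) :=
        mul_le_mul_of_nonneg_left hOde hFy0
      have hXk : X τ ^ (k - 1) * X τ = X τ ^ k := by
        rw [← Real.rpow_add_one hXτ.ne' (k - 1)]
        norm_num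
      have hXcan : X τ ^ (k - 1) * X τ ^ (1 - k) = 1 := by
        rw [← Real.rpow_add hXτ]
        norm_num
      have heq : Fx (G τ, X τ) * γ τ
            + Fy (G τ, X τ) * (p * a τ * M ^ k * X τ ^ (1 - k) + γ τ * X τ)
          = 2 * M ^ k * (a τ * Real.exp (-(k * G τ))) := by
        simp only [hFxdef, hFydef]
        linear_combination (k * Real.exp (-(k * G τ)) * γ τ) * hXk
          + (k * p * a τ * M ^ k * Real.exp (-(k * G τ))) * hXcan
          + (a τ * M ^ k * Real.exp (-(k * G τ))) * hkp
      linarith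
    have hmono := intervalIntegral.integral_mono_ae_restrict ht0 hIg hBg hae
    -- the main estimate
    have hF0 : F (G 0, X 0) = ε ^ k := by
      simp [hFdef, hGdef, hX0, intervalIntegral.integral_same]
    have hkey2 : F (G t, X t)
        ≤ ε ^ k + 2 * M ^ k * ∫ τ in (0:ℝ)..t, a τ * Real.exp (-(k * G τ)) := by
      rw [← intervalIntegral.integral_const_mul]
      rw [hF0] at hkey
      linarith
    -- final algebra
    have hXt : 0 < X t := hXpos t ⟨ht0, le_refl t⟩
    have hFt_pos : 0 < F (G t, X t) := by
      simp only [hFdef]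
      exact mul_pos (Real.exp_pos _) (Real.rpow_pos_of_pos hXt k)
    have hrp : F (G t, X t) ^ (p/2)
        ≤ (ε ^ k + 2 * M ^ k * ∫ τ in (0:ℝ)..t, a τ * Real.exp (-(k * G τ))) ^ (p/2) :=
      Real.rpow_le_rpow hFt_pos.le hkey2 (by positivity)
    have hFt_val : F (G t, X t) ^ (p/2) = Real.exp (-(G t)) * X t := by
      simp only [hFdef]
      rw [Real.mul_rpow (Real.exp_nonneg _) (Real.rpow_nonneg hXt.le _),
        ← Real.exp_mul, ← Real.rpow_mul hXt.le, hk2, Real.rpow_one]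
      have hexp : -(k * G t) * (p / 2) = -(G t) := by linear_combination (-(G t)) * hk2
      rw [hexp]
    rw [hFt_val] at hrp
    have hfinal := mul_le_mul_of_nonneg_left hrp (Real.exp_nonneg (G t))
    rw [← mul_assoc, ← Real.exp_add] at hfinal
    simp only [add_neg_cancel, Real.exp_zero, one_mul] at hfinal
    simp only [neg_mul]
    exact hfinal
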